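/- arXiv:2401.12623 — 2 statements merged into one kernel-verified Lean document; each statement's English description precedes it below -/
import Mathlib

section
/- Let f₁,…,f_N : ℝ^d → ℝ be differentiable and define the augmented cost f̃(x) := (ν/2)·xᵀ(I − (1/N)𝟙𝟙ᵀ)x + N·∑_{i=1}^N f_i((1/N)∑_{j=1}^N x_j) on ℝ^{Nd}, where ν > 0 and 𝟙 denotes the stacked identity 1_N ⊗ I_d. Then a point x* ∈ ℝ^d is a stationary point of ∑_{i=1}^N f_i (i.e. ∑_i ∇f_i(x*) = 0) if and only if the consensual point 𝟙x* := (x*,…,x*) ∈ ℝ^{Nd} is a stationary point of f̃. -/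
/-!
At a consensual point `𝟙 y` every block equals the block average, so each term
`‖x i - avg x‖ ^ 2` of the disagreement penalty vanishes to second order and contributes nothing
to the gradient. The remaining term `N * ∑ i, f i (avg x)` is a composition with the averaging
map, whose adjoint is `N⁻¹` times the consensual embedding `y ↦ 𝟙 y`. Hence
`∇ f̃ (𝟙 y) = 𝟙 (∑ i, ∇ f i y)`, which vanishes exactly when `∑ i, ∇ f i y` does.
-/

noncomputable section

open InnerProductSpace
open scoped RealInnerProductSpace

section GradientAlgebra

variable {F : Type*} [NormedAddCommGroup F] [InnerProductSpace ℝ F] [CompleteSpace F]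
  {f g : F → ℝ} {f' g' x : F}

theorem HasGradientAt.fun_add (hf : HasGradientAt f f' x) (hg : HasGradientAt g g' x) :
    HasGradientAt (fun z => f z + g z) (f' + g') x := by
  rw [hasGradientAt_iff_hasFDerivAt, map_add]
  exact hf.hasFDerivAt.add hg.hasFDerivAt

theorem HasGradientAt.fun_sum {ι : Type*} {u : Finset ι} {f : ι → F → ℝ} {f' : ι → F}
    (h : ∀ i ∈ u, HasGradientAt (f i) (f' i) x) :
    HasGradientAt (fun z => ∑ i ∈ u, f i z) (∑ i ∈ u, f' i) x := by
  rw [hasGradientAt_iff_hasFDerivAt, map_sum]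
  exact HasFDerivAt.fun_sum fun i hi => (h i hi).hasFDerivAt

theorem HasGradientAt.const_mul (hf : HasGradientAt f f' x) (c : ℝ) :
    HasGradientAt (fun z => c * f z) (c • f') x := by
  rw [hasGradientAt_iff_hasFDerivAt, map_smul]
  exact hf.hasFDerivAt.const_mul c

end GradientAlgebra

section Consensus

variable {ι E : Type*} [Fintype ι] [NormedAddCommGroup E] [InnerProductSpace ℝ E]

theorem inner_toLp_const (y : E) (v : PiLp 2 fun _ : ι => E) :
    ⟪WithLp.toLp 2 (fun _ => y), v⟫ = ⟪y, ∑ j, v j⟫ := by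
  simp [PiLp.inner_apply, inner_sum]

variable (ι E) in
def blockAverage : (PiLp 2 fun _ : ι => E) →L[ℝ] E :=
  (Fintype.card ι : ℝ)⁻¹ • ∑ j, PiLp.proj 2 (fun _ : ι => E) j

theorem blockAverage_apply (x : PiLp 2 fun _ : ι => E) :
    blockAverage ι E x = (Fintype.card ι : ℝ)⁻¹ • ∑ j, x j := by
  simp [blockAverage]

theorem blockAverage_toLp_const [Nonempty ι] (y : E) :
    blockAverage ι E (WithLp.toLp 2 fun _ => y) = y := by
  rw [blockAverage_apply]
  simp only [Finset.sum_const, Finset.card_univ, ← Nat.cast_smul_eq_nsmul ℝ, smul_smul]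
  rw [inv_mul_cancel₀ (Nat.cast_ne_zero.2 Fintype.card_ne_zero), one_smul]

variable [CompleteSpace E]

theorem hasGradientAt_sum_norm_sq_sub_blockAverage_toLp_const (y : E) :
    HasGradientAt (fun x : PiLp 2 (fun _ : ι => E) => ∑ i, ‖x i - blockAverage ι E x‖ ^ 2)
      0 (WithLp.toLp 2 fun _ => y) := by
  rw [hasGradientAt_iff_hasFDerivAt, map_zero]
  rw [← Finset.sum_const_zero (s := (Finset.univ : Finset ι))
    (M := (PiLp 2 fun _ : ι => E) →L[ℝ] ℝ)]
  refine HasFDerivAt.fun_sum fun i _ => ?_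
  have : Nonempty ι := ⟨i⟩
  let deviation := PiLp.proj (𝕜 := ℝ) 2 (fun _ : ι => E) i - blockAverage ι E
  have hdeviation : deviation (WithLp.toLp 2 fun _ => y) = 0 := by
    simp only [deviation, sub_apply, blockAverage_toLp_const, PiLp.proj_apply, sub_self]
  refine (deviation.hasFDerivAt.norm_sq).congr_fderiv ?_
  rw [hdeviation, map_zero, ContinuousLinearMap.zero_comp, smul_zero]

theorem HasGradientAt.card_mul_comp_blockAverage_toLp_const [Nonempty ι] {g : E → ℝ}
    {g' y : E} (hg : HasGradientAt g g' y) :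
    HasGradientAt
      (fun x : PiLp 2 (fun _ : ι => E) => (Fintype.card ι : ℝ) * g (blockAverage ι E x))
      (WithLp.toLp 2 fun _ => g') (WithLp.toLp 2 fun _ => y) := by
  rw [← blockAverage_toLp_const (ι := ι) y, hasGradientAt_iff_hasFDerivAt] at hg
  rw [hasGradientAt_iff_hasFDerivAt]
  refine ((hg.comp _ (blockAverage ι E).hasFDerivAt).const_mul _).congr_fderiv ?_
  ext v
  simp only [smul_apply, ContinuousLinearMap.comp_apply, toDual_apply_apply, blockAverage_apply,
    inner_toLp_const, inner_smul_right, smul_eq_mul]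
  exact mul_inv_cancel_left₀ (Nat.cast_ne_zero.2 Fintype.card_ne_zero) _

end Consensus

theorem stmt0_general (N d : ℕ) (hN : 0 < N) (ν : ℝ)
    (f : Fin N → EuclideanSpace ℝ (Fin d) → ℝ)
    (hf : ∀ i, Differentiable ℝ (f i))
    (ftilde : PiLp 2 (fun _ : Fin N => EuclideanSpace ℝ (Fin d)) → ℝ)
    (hft : ftilde = fun x =>
      ν / 2 * ∑ i, ‖x i - (N : ℝ)⁻¹ • ∑ j, x j‖ ^ 2
        + (N : ℝ) * ∑ i, f i ((N : ℝ)⁻¹ • ∑ j, x j))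
    (xstar : EuclideanSpace ℝ (Fin d)) :
    (∑ i, gradient (f i) xstar = 0) ↔
      gradient ftilde
        ((WithLp.equiv 2 (∀ _ : Fin N, EuclideanSpace ℝ (Fin d))).symm
          (fun _ => xstar)) = 0 := by
  have : Nonempty (Fin N) := ⟨⟨0, hN⟩⟩
  have hcost := (HasGradientAt.fun_sum (u := Finset.univ) fun i _ =>
    (hf i xstar).hasGradientAt).card_mul_comp_blockAverage_toLp_const (ι := Fin N)
  have hgrad := ((hasGradientAt_sum_norm_sq_sub_blockAverage_toLp_const (ι := Fin N) xstar
    ).const_mul (ν / 2)).fun_add hcost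
  simp only [blockAverage_apply, Fintype.card_fin, smul_zero, zero_add, ← hft] at hgrad
  rw [WithLp.equiv_symm_apply, hgrad.gradient]
  exact ((WithLp.toLp_eq_zero (p := 2)).trans Function.const_eq_zero).symm

theorem stmt0 (N d : ℕ) (hN : 0 < N) (ν : ℝ) (hν : 0 < ν)
    (f : Fin N → EuclideanSpace ℝ (Fin d) → ℝ)
    (hf : ∀ i, Differentiable ℝ (f i))
    (ftilde : PiLp 2 (fun _ : Fin N => EuclideanSpace ℝ (Fin d)) → ℝ)
    (hft : ftilde = fun x =>
      ν / 2 * ∑ i, ‖x i - (N : ℝ)⁻¹ • ∑ j, x j‖ ^ 2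
        + (N : ℝ) * ∑ i, f i ((N : ℝ)⁻¹ • ∑ j, x j))
    (xstar : EuclideanSpace ℝ (Fin d)) :
    (∑ i, gradient (f i) xstar = 0) ↔
      gradient ftilde
        ((WithLp.equiv 2 (∀ _ : Fin N, EuclideanSpace ℝ (Fin d))).symm
          (fun _ => xstar)) = 0 :=
  stmt0_general N d hN ν f hf ftilde hft xstar
end
end

section
/- Let V_I : ℝ^{m₁} → ℝ and V_E : ℝ^{m₂} → ℝ, maps T_I : ℝ^{m₁} → ℝ^{m₁} and T_E : ℝ^{m₁} × ℝ^{m₂} → ℝ^{m₂}, and positive constants b_{I,3}, b_{E,3}, b_{E,4}, b_{E,2}, β satisfy for all x, x' ∈ ℝ^{m₁}, y, y' ∈ ℝ^{m₂}: (i) V_I(T_I(x)) − V_I(x) ≤ −b_{I,3}‖x‖²; (ii) V_E(T_E(0, y)) − V_E(y) ≤ −b_{E,3}‖y‖²; (iii) |V_E(y) − V_E(y')| ≤ b_{E,4}‖y − y'‖(‖y‖ + ‖y'‖); (iv) ‖T_E(x, y) − T_E(x', y')‖ ≤ β(‖x − x'‖ + ‖y − y'‖); (v) T_E(0,0) = 0.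 Then there exists κ > 0 such that U(x,y) := V_I(x) + κ·V_E(y) satisfies U(T_I(x), T_E(x,y)) − U(x,y) ≤ −q(‖x‖² + ‖y‖²) for all (x,y) and some q > 0; in fact any κ < min{ b_{I,3}/(b_{E,4}β²), b_{I,3}b_{E,3}/(b_{E,4}²β⁴ + b_{E,3}b_{E,4}β²) } works. -/
lemma quadform_aux (a b c : ℝ) (ha : 0 < a) (hc : 0 < c) (hb : 0 ≤ b)
    (h : b ^ 2 < a * c) :
    ∃ q > 0, ∀ X Y : ℝ, 0 ≤ X → 0 ≤ Y →
      q * (X ^ 2 + Y ^ 2) ≤ a * X ^ 2 - 2 * b * X * Y + c * Y ^ 2 := by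
  set t : ℝ := (b ^ 2 / a + c) / 2 with ht
  have hba : b ^ 2 / a < c := (div_lt_iff₀ ha).2 (by nlinarith)
  have ht0 : 0 < t := by
    have : 0 ≤ b ^ 2 / a := div_nonneg (sq_nonneg b) ha.le
    positivity
  have htc : t < c := by
    have : 0 ≤ b ^ 2 / a := div_nonneg (sq_nonneg b) ha.le
    simp only [ht]; linarith
  have hbt : b ^ 2 < a * t := by
    have := (div_lt_iff₀ ha).1 (show b ^ 2 / a < t by simp only [ht]; linarith)
    linarith
  have hq1 : 0 < a - b ^ 2 / t := by
    have : b ^ 2 / t < a := (div_lt_iff₀ ht0).2 (by nlinarith)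
    linarith
  have hq2 : 0 < c - t := by linarith
  refine ⟨min (a - b ^ 2 / t) (c - t), lt_min hq1 hq2, ?_⟩
  intro X Y hX hY
  have hm1 : min (a - b ^ 2 / t) (c - t) ≤ a - b ^ 2 / t := min_le_left _ _
  have hm2 : min (a - b ^ 2 / t) (c - t) ≤ c - t := min_le_right _ _
  have key : (a - b ^ 2 / t) * X ^ 2 + (c - t) * Y ^ 2 ≤
      a * X ^ 2 - 2 * b * X * Y + c * Y ^ 2 := by
    have hsq : 0 ≤ (b * X - t * Y) ^ 2 := sq_nonneg _
    have hbt2 : b ^ 2 / t * t = b ^ 2 := div_mul_cancel₀ _ ht0.ne'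
    nlinarith [sq_nonneg X, sq_nonneg Y, mul_pos ht0 ht0]
  nlinarith [sq_nonneg X, sq_nonneg Y]

theorem stmt13 (m₁ m₂ : ℕ)
    (VI : EuclideanSpace ℝ (Fin m₁) → ℝ) (VE : EuclideanSpace ℝ (Fin m₂) → ℝ)
    (TI : EuclideanSpace ℝ (Fin m₁) → EuclideanSpace ℝ (Fin m₁))
    (TE : EuclideanSpace ℝ (Fin m₁) → EuclideanSpace ℝ (Fin m₂) → EuclideanSpace ℝ (Fin m₂))
    (bI3 bE3 bE4 bE2 β : ℝ)
    (hbI3 : 0 < bI3) (hbE3 : 0 < bE3) (hbE4 : 0 < bE4) (hbE2 : 0 < bE2) (hβ : 0 < β)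
    (h1 : ∀ x, VI (TI x) - VI x ≤ -(bI3 * ‖x‖ ^ 2))
    (h2 : ∀ y, VE (TE 0 y) - VE y ≤ -(bE3 * ‖y‖ ^ 2))
    (h3 : ∀ y y', |VE y - VE y'| ≤ bE4 * ‖y - y'‖ * (‖y‖ + ‖y'‖))
    (h4 : ∀ x x' y y', ‖TE x y - TE x' y'‖ ≤ β * (‖x - x'‖ + ‖y - y'‖))
    (h5 : TE 0 0 = 0) :
    (∃ κ > 0, ∃ q > 0, ∀ x y,
      (VI (TI x) + κ * VE (TE x y)) - (VI x + κ * VE y) ≤ -(q * (‖x‖ ^ 2 + ‖y‖ ^ 2))) ∧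
    ∀ κ : ℝ, 0 < κ →
      κ < min (bI3 / (bE4 * β ^ 2))
        (bI3 * bE3 / (bE4 ^ 2 * β ^ 4 + bE3 * bE4 * β ^ 2)) →
      ∃ q > 0, ∀ x y,
        (VI (TI x) + κ * VE (TE x y)) - (VI x + κ * VE y) ≤ -(q * (‖x‖ ^ 2 + ‖y‖ ^ 2)) := by
  have hden1 : 0 < bE4 * β ^ 2 := by positivity
  have hden2 : 0 < bE4 ^ 2 * β ^ 4 + bE3 * bE4 * β ^ 2 := by positivity
  have main : ∀ κ : ℝ, 0 < κ →
      κ < min (bI3 / (bE4 * β ^ 2))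
        (bI3 * bE3 / (bE4 ^ 2 * β ^ 4 + bE3 * bE4 * β ^ 2)) →
      ∃ q > 0, ∀ x y,
        (VI (TI x) + κ * VE (TE x y)) - (VI x + κ * VE y) ≤ -(q * (‖x‖ ^ 2 + ‖y‖ ^ 2)) := by
    intro κ hκ hκlt
    have hκ1 : κ < bI3 / (bE4 * β ^ 2) := lt_of_lt_of_le hκlt (min_le_left _ _)
    have hκ2 : κ < bI3 * bE3 / (bE4 ^ 2 * β ^ 4 + bE3 * bE4 * β ^ 2) :=
      lt_of_lt_of_le hκlt (min_le_right _ _)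
    have hκ1' : κ * (bE4 * β ^ 2) < bI3 := (lt_div_iff₀ hden1).1 hκ1
    have hκ2' : κ * (bE4 ^ 2 * β ^ 4 + bE3 * bE4 * β ^ 2) < bI3 * bE3 :=
      (lt_div_iff₀ hden2).1 hκ2
    set a : ℝ := bI3 - κ * bE4 * β ^ 2 with hadef
    set b : ℝ := κ * bE4 * β ^ 2 with hbdef
    set c : ℝ := κ * bE3 with hcdef
    have ha : 0 < a := by simp only [hadef]; nlinarith
    have hc : 0 < c := by positivity
    have hb : 0 ≤ b := by positivity
    have hbac : b ^ 2 < a * c := by simp only [hadef, hbdef, hcdef]; nlinarith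
    obtain ⟨q, hq, hquad⟩ := quadform_aux a b c ha hc hb hbac
    refine ⟨q, hq, ?_⟩
    intro x y
    set X := ‖x‖ with hXdef
    set Y := ‖y‖ with hYdef
    have hX : 0 ≤ X := norm_nonneg _
    have hY : 0 ≤ Y := norm_nonneg _
    -- bounds on the norms of TE values
    have hTxy : ‖TE x y‖ ≤ β * (X + Y) := by
      have := h4 x 0 y 0
      simpa [h5] using this
    have hT0y : ‖TE 0 y‖ ≤ β * Y := by
      have := h4 0 0 y 0
      simpa [h5] using this
    have hdiff : ‖TE x y - TE 0 y‖ ≤ β * X := by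
      have := h4 x 0 y y
      simpa using this
    -- cross term
    have hcross : VE (TE x y) - VE (TE 0 y) ≤ bE4 * β ^ 2 * (X ^ 2 + 2 * X * Y) := by
      have habs := h3 (TE x y) (TE 0 y)
      have h0 : VE (TE x y) - VE (TE 0 y) ≤
          bE4 * ‖TE x y - TE 0 y‖ * (‖TE x y‖ + ‖TE 0 y‖) :=
        le_trans (le_abs_self _) habs
      have hn1 : (0:ℝ) ≤ ‖TE x y - TE 0 y‖ := norm_nonneg _
      have hsum : ‖TE x y‖ + ‖TE 0 y‖ ≤ β * X + 2 * (β * Y) := by linarith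
      have hsum0 : (0:ℝ) ≤ ‖TE x y‖ + ‖TE 0 y‖ := by positivity
      have hβX : (0:ℝ) ≤ β * X := by positivity
      have hprod : ‖TE x y - TE 0 y‖ * (‖TE x y‖ + ‖TE 0 y‖) ≤
          (β * X) * (β * X + 2 * (β * Y)) :=
        mul_le_mul hdiff hsum hsum0 hβX
      have := mul_le_mul_of_nonneg_left hprod hbE4.le
      nlinarith [this]
    have hi := h1 x
    have he := h2 y
    have hq2 := hquad X Y hX hY
    have hκle : 0 ≤ κ := hκ.le
    have hcross' : κ * (VE (TE x y) - VE (TE 0 y)) ≤ κ * (bE4 * β ^ 2 * (X ^ 2 + 2 * X * Y)) :=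
      mul_le_mul_of_nonneg_left hcross hκle
    have he' : κ * (VE (TE 0 y) - VE y) ≤ κ * (-(bE3 * Y ^ 2)) :=
      mul_le_mul_of_nonneg_left he hκle
    have e1 : κ * (bE4 * β ^ 2 * (X ^ 2 + 2 * X * Y)) = b * X ^ 2 + 2 * b * X * Y := by
      simp only [hbdef]; ring
    have e2 : κ * (-(bE3 * Y ^ 2)) = -(c * Y ^ 2) := by
      simp only [hcdef]; ring
    have e3 : a * X ^ 2 = bI3 * X ^ 2 - b * X ^ 2 := by
      simp only [hadef, hbdef]; ring
    linarith
  refine ⟨?_, main⟩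
  set M := min (bI3 / (bE4 * β ^ 2))
    (bI3 * bE3 / (bE4 ^ 2 * β ^ 4 + bE3 * bE4 * β ^ 2)) with hM
  have hM0 : 0 < M := lt_min (by positivity) (by positivity)
  obtain ⟨q, hq, h⟩ := main (M / 2) (by linarith) (by linarith)
  exact ⟨M / 2, by linarith, q, hq, h⟩
end
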